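/- For every positive integer i, the equality \sum_{s=0}^{i-1} s^4\,\binom{2i-1}{s} = \bigl(i^4 + i^3 - \tfrac{9}{4}i^2 + \tfrac{3}{4}i\bigr)\cdot 2^{2i-2} - \bigl(2i^4 - i^3 - i^2 + \tfrac{1}{2}i\bigr)\cdot\binom{2i-1}{i} holds (as an identity of rational numbers; equivalently, 4\sum_{s=0}^{i-1} s^4\binom{2i-1}{s} = (4i^4 + 4i^3 - 9i^2 + 3i)\cdot 2^{2i-2} - (8i^4 - 4i^3 - 4i^2 + 2i)\cdot\binom{2i-1}{i}). -/

import Mathlib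

private lemma step_lemma (n m : ℕ) (f : ℕ → ℚ) :
    ∑ s ∈ Finset.range (m + 1), (s : ℚ) * f s * ((n + 1).choose s : ℚ)
      = ((n : ℚ) + 1) * ∑ t ∈ Finset.range m, f (t + 1) * (n.choose t : ℚ) := by
  rw [Finset.sum_range_succ']
  simp only [Nat.cast_zero, zero_mul, add_zero]
  rw [Finset.mul_sum]
  refine Finset.sum_congr rfl fun t _ => ?_
  have h := Nat.add_one_mul_choose_eq n t
  have h' : ((n : ℚ) + 1) * (n.choose t : ℚ) = ((n + 1).choose (t + 1) : ℚ) * ((t : ℚ) + 1) := by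
    exact_mod_cast congrArg (Nat.cast : ℕ → ℚ) h
  push_cast
  linear_combination (-f (t + 1)) * h'

private lemma even_half (m : ℕ) :
    2 * (∑ t ∈ Finset.range m, (2 * m).choose t) + (2 * m).choose m = 4 ^ m := by
  have h1 : ∑ t ∈ Finset.range (2 * m + 1), (2 * m).choose t = 2 ^ (2 * m) :=
    Nat.sum_range_choose (2 * m)
  have hle : m + 1 ≤ 2 * m + 1 := by omega
  rw [← Finset.sum_range_add_sum_Ico _ hle, Finset.sum_Ico_eq_sum_range] at h1
  have h2 : 2 * m + 1 - (m + 1) = m := by omega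
  rw [h2] at h1
  have h3 : ∑ t ∈ Finset.range m, (2 * m).choose (m + 1 + t)
      = ∑ t ∈ Finset.range m, (2 * m).choose t := by
    rw [← Finset.sum_range_reflect (fun t => (2 * m).choose (m + 1 + t)) m]
    refine Finset.sum_congr rfl fun t ht => ?_
    simp only [Finset.mem_range] at ht
    have h4 : m + 1 + (m - 1 - t) = 2 * m - t := by omega
    rw [h4, Nat.choose_symm (by omega)]
  rw [h3, Finset.sum_range_succ] at h1
  have h5 : 4 ^ m = 2 ^ (2 * m) := by rw [pow_mul]; norm_num
  omega

set_option maxHeartbeats 1000000 in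
/-- Proposition 2.6 (T₄): for every positive integer `i`,
`∑_{s=0}^{i-1} s⁴·C(2i-1, s)
  = (i⁴ + i³ - 9i²/4 + 3i/4)·2^(2i-2) - (2i⁴ - i³ - i² + i/2)·C(2i-1, i)`. -/
theorem sum_T4 (i : ℕ) (hi : 0 < i) :
    (∑ s ∈ Finset.range i, (s : ℚ) ^ 4 * Nat.choose (2 * i - 1) s) =
      ((i : ℚ) ^ 4 + (i : ℚ) ^ 3 - 9 / 4 * (i : ℚ) ^ 2 + 3 / 4 * i) * 2 ^ (2 * i - 2) -
        (2 * (i : ℚ) ^ 4 - (i : ℚ) ^ 3 - (i : ℚ) ^ 2 + (i : ℚ) / 2) *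
          Nat.choose (2 * i - 1) i := by
  rcases lt_or_ge i 5 with hsmall | hbig
  · interval_cases i <;> norm_num [Finset.sum_range_succ, Nat.choose]
  obtain ⟨j, rfl⟩ : ∃ j, i = j + 5 := ⟨i - 5, by omega⟩
  have e1 : 2 * (j + 5) - 1 = 2 * j + 9 := by omega
  have e2 : 2 * (j + 5) - 2 = 2 * j + 8 := by omega
  rw [e1, e2]
  -- step 1
  have A : (∑ s ∈ Finset.range (j + 5), (s : ℚ) ^ 4 * ((2 * j + 9).choose s : ℚ))
      = (2 * (j : ℚ) + 9) *
          ∑ t ∈ Finset.range (j + 4), ((t : ℚ) + 1) ^ 3 * ((2 * j + 8).choose t : ℚ) := by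
    have h := step_lemma (2 * j + 8) (j + 4) (fun s => (s : ℚ) ^ 3)
    rw [show 2 * j + 8 + 1 = 2 * j + 9 from by omega,
        show j + 4 + 1 = j + 5 from by omega] at h
    push_cast at h
    have hL : (∑ s ∈ Finset.range (j + 5), (s : ℚ) ^ 4 * ((2 * j + 9).choose s : ℚ))
        = ∑ s ∈ Finset.range (j + 5), (s : ℚ) * (s : ℚ) ^ 3 * ((2 * j + 9).choose s : ℚ) :=
      Finset.sum_congr rfl fun s _ => by ring
    rw [hL, h]; ring
  -- step 2 : split (t+1)^3 = t*(t^2+3t+3) + 1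
  have B : (∑ t ∈ Finset.range (j + 4), ((t : ℚ) + 1) ^ 3 * ((2 * j + 8).choose t : ℚ))
      = (∑ t ∈ Finset.range (j + 4),
            (t : ℚ) * ((t : ℚ) ^ 2 + 3 * (t : ℚ) + 3) * ((2 * j + 8).choose t : ℚ))
        + (∑ t ∈ Finset.range (j + 4), ((2 * j + 8).choose t : ℚ)) := by
    rw [← Finset.sum_add_distrib]
    exact Finset.sum_congr rfl fun t _ => by ring
  -- step 3
  have C3 : (∑ t ∈ Finset.range (j + 4),
        (t : ℚ) * ((t : ℚ) ^ 2 + 3 * (t : ℚ) + 3) * ((2 * j + 8).choose t : ℚ))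
      = (2 * (j : ℚ) + 8) *
          ((∑ u ∈ Finset.range (j + 3),
              (u : ℚ) * ((u : ℚ) + 5) * ((2 * j + 7).choose u : ℚ))
            + 7 * ∑ u ∈ Finset.range (j + 3), ((2 * j + 7).choose u : ℚ)) := by
    have h := step_lemma (2 * j + 7) (j + 3) (fun s => (s : ℚ) ^ 2 + 3 * (s : ℚ) + 3)
    rw [show 2 * j + 7 + 1 = 2 * j + 8 from by omega,
        show j + 3 + 1 = j + 4 from by omega] at h
    push_cast at h
    rw [h]
    have hsplit : (∑ u ∈ Finset.range (j + 3),
          (((u : ℚ) + 1) ^ 2 + 3 * ((u : ℚ) + 1) + 3) * ((2 * j + 7).choose u : ℚ))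
        = (∑ u ∈ Finset.range (j + 3),
              (u : ℚ) * ((u : ℚ) + 5) * ((2 * j + 7).choose u : ℚ))
          + 7 * ∑ u ∈ Finset.range (j + 3), ((2 * j + 7).choose u : ℚ) := by
      rw [Finset.mul_sum, ← Finset.sum_add_distrib]
      exact Finset.sum_congr rfl fun u _ => by ring
    rw [hsplit]; ring
  -- step 4
  have D : (∑ u ∈ Finset.range (j + 3),
        (u : ℚ) * ((u : ℚ) + 5) * ((2 * j + 7).choose u : ℚ))
      = (2 * (j : ℚ) + 7) *
          ((∑ v ∈ Finset.range (j + 2), (v : ℚ) * 1 * ((2 * j + 6).choose v : ℚ))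
            + 6 * ∑ v ∈ Finset.range (j + 2), ((2 * j + 6).choose v : ℚ)) := by
    have h := step_lemma (2 * j + 6) (j + 2) (fun s => (s : ℚ) + 5)
    rw [show 2 * j + 6 + 1 = 2 * j + 7 from by omega,
        show j + 2 + 1 = j + 3 from by omega] at h
    push_cast at h
    rw [h]
    have hsplit : (∑ v ∈ Finset.range (j + 2),
          ((v : ℚ) + 1 + 5) * ((2 * j + 6).choose v : ℚ))
        = (∑ v ∈ Finset.range (j + 2), (v : ℚ) * 1 * ((2 * j + 6).choose v : ℚ))
          + 6 * ∑ v ∈ Finset.range (j + 2), ((2 * j + 6).choose v : ℚ) := by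
      rw [Finset.mul_sum, ← Finset.sum_add_distrib]
      exact Finset.sum_congr rfl fun v _ => by ring
    rw [hsplit]; ring
  -- step 5
  have E : (∑ v ∈ Finset.range (j + 2), (v : ℚ) * 1 * ((2 * j + 6).choose v : ℚ))
      = (2 * (j : ℚ) + 6) * ∑ w ∈ Finset.range (j + 1), ((2 * j + 5).choose w : ℚ) := by
    have h := step_lemma (2 * j + 5) (j + 1) (fun _ => (1 : ℚ))
    rw [show 2 * j + 5 + 1 = 2 * j + 6 from by omega,
        show j + 1 + 1 = j + 2 from by omega] at h
    push_cast at h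
    rw [h]
    simp only [one_mul]
    ring
  -- half-sum values
  have hH1 : 2 * (∑ t ∈ Finset.range (j + 4), ((2 * j + 8).choose t : ℚ))
      + ((2 * j + 8).choose (j + 4) : ℚ) = 4 ^ j * 256 := by
    have h := even_half (j + 4)
    rw [show 2 * (j + 4) = 2 * j + 8 from by omega] at h
    have h' : ((2 * (∑ t ∈ Finset.range (j + 4), (2 * j + 8).choose t)
        + (2 * j + 8).choose (j + 4) : ℕ) : ℚ) = ((4 ^ (j + 4) : ℕ) : ℚ) := by rw [h]
    push_cast at h'
    rw [pow_add] at h'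
    norm_num at h'
    linarith [h']
  have hH2 : (∑ u ∈ Finset.range (j + 3), ((2 * j + 7).choose u : ℚ))
      + ((2 * j + 7).choose (j + 3) : ℚ) = 4 ^ j * 64 := by
    have h := Nat.sum_range_choose_halfway (j + 3)
    rw [show 2 * (j + 3) + 1 = 2 * j + 7 from by omega, Finset.sum_range_succ] at h
    have h' : ((∑ u ∈ Finset.range (j + 3), (2 * j + 7).choose u
        + (2 * j + 7).choose (j + 3) : ℕ) : ℚ) = ((4 ^ (j + 3) : ℕ) : ℚ) := by rw [h]
    push_cast at h'
    rw [pow_add] at h'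
    norm_num at h'
    linarith [h']
  have hH3 : 2 * ((∑ v ∈ Finset.range (j + 2), ((2 * j + 6).choose v : ℚ))
        + ((2 * j + 6).choose (j + 2) : ℚ))
      + ((2 * j + 6).choose (j + 3) : ℚ) = 4 ^ j * 64 := by
    have h := even_half (j + 3)
    rw [show 2 * (j + 3) = 2 * j + 6 from by omega, Finset.sum_range_succ] at h
    have h' : ((2 * (∑ v ∈ Finset.range (j + 2), (2 * j + 6).choose v
        + (2 * j + 6).choose (j + 2)) + (2 * j + 6).choose (j + 3) : ℕ) : ℚ)
        = ((4 ^ (j + 3) : ℕ) : ℚ) := by rw [h]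
    push_cast at h'
    rw [pow_add] at h'
    norm_num at h'
    linarith [h']
  have hH4 : (∑ w ∈ Finset.range (j + 1), ((2 * j + 5).choose w : ℚ))
      + ((2 * j + 5).choose (j + 1) : ℚ) + ((2 * j + 5).choose (j + 2) : ℚ)
      = 4 ^ j * 16 := by
    have h := Nat.sum_range_choose_halfway (j + 2)
    rw [show 2 * (j + 2) + 1 = 2 * j + 5 from by omega, Finset.sum_range_succ,
        Finset.sum_range_succ] at h
    have h' : ((∑ w ∈ Finset.range (j + 1), (2 * j + 5).choose w
        + (2 * j + 5).choose (j + 1) + (2 * j + 5).choose (j + 2) : ℕ) : ℚ)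
        = ((4 ^ (j + 2) : ℕ) : ℚ) := by rw [h]
    push_cast at h'
    rw [pow_add] at h'
    norm_num at h'
    linarith [h']
  -- ratio identities between binomial coefficients
  have r1 : (2 * (j : ℚ) + 9) * ((2 * j + 8).choose (j + 4) : ℚ)
      = ((2 * j + 9).choose (j + 5) : ℚ) * ((j : ℚ) + 5) := by
    have h := Nat.add_one_mul_choose_eq (2 * j + 8) (j + 4)
    rw [show 2 * j + 8 + 1 = 2 * j + 9 from by omega,
        show j + 4 + 1 = j + 5 from by omega] at h
    have h' : (((2 * j + 9) * (2 * j + 8).choose (j + 4) : ℕ) : ℚ)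
        = (((2 * j + 9).choose (j + 5) * (j + 5) : ℕ) : ℚ) := by rw [h]
    push_cast at h'
    linarith [h']
  have r2 : (2 * (j : ℚ) + 8) * ((2 * j + 7).choose (j + 3) : ℚ)
      = ((2 * j + 8).choose (j + 4) : ℚ) * ((j : ℚ) + 4) := by
    have h := Nat.add_one_mul_choose_eq (2 * j + 7) (j + 3)
    rw [show 2 * j + 7 + 1 = 2 * j + 8 from by omega,
        show j + 3 + 1 = j + 4 from by omega] at h
    have h' : (((2 * j + 8) * (2 * j + 7).choose (j + 3) : ℕ) : ℚ)
        = (((2 * j + 8).choose (j + 4) * (j + 4) : ℕ) : ℚ) := by rw [h]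
    push_cast at h'
    linarith [h']
  have r3 : (2 * (j : ℚ) + 7) * ((2 * j + 6).choose (j + 2) : ℚ)
      = ((2 * j + 7).choose (j + 3) : ℚ) * ((j : ℚ) + 3) := by
    have h := Nat.add_one_mul_choose_eq (2 * j + 6) (j + 2)
    rw [show 2 * j + 6 + 1 = 2 * j + 7 from by omega,
        show j + 2 + 1 = j + 3 from by omega] at h
    have h' : (((2 * j + 7) * (2 * j + 6).choose (j + 2) : ℕ) : ℚ)
        = (((2 * j + 7).choose (j + 3) * (j + 3) : ℕ) : ℚ) := by rw [h]
    push_cast at h'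
    linarith [h']
  have r4 : (2 * (j : ℚ) + 6) * ((2 * j + 5).choose (j + 1) : ℚ)
      = ((2 * j + 6).choose (j + 2) : ℚ) * ((j : ℚ) + 2) := by
    have h := Nat.add_one_mul_choose_eq (2 * j + 5) (j + 1)
    rw [show 2 * j + 5 + 1 = 2 * j + 6 from by omega,
        show j + 1 + 1 = j + 2 from by omega] at h
    have h' : (((2 * j + 6) * (2 * j + 5).choose (j + 1) : ℕ) : ℚ)
        = (((2 * j + 6).choose (j + 2) * (j + 2) : ℕ) : ℚ) := by rw [h]
    push_cast at h'
    linarith [h']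
  have r5 : ((2 * j + 6).choose (j + 3) : ℚ) * ((j : ℚ) + 3)
      = ((2 * j + 6).choose (j + 2) : ℚ) * ((j : ℚ) + 4) := by
    have h := Nat.choose_succ_right_eq (2 * j + 6) (j + 2)
    rw [show j + 2 + 1 = j + 3 from by omega,
        show 2 * j + 6 - (j + 2) = j + 4 from by omega] at h
    have h' : (((2 * j + 6).choose (j + 3) * (j + 3) : ℕ) : ℚ)
        = (((2 * j + 6).choose (j + 2) * (j + 4) : ℕ) : ℚ) := by rw [h]
    push_cast at h'
    linarith [h']
  have r6 : ((2 * j + 5).choose (j + 2) : ℚ) * ((j : ℚ) + 2)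
      = ((2 * j + 5).choose (j + 1) : ℚ) * ((j : ℚ) + 4) := by
    have h := Nat.choose_succ_right_eq (2 * j + 5) (j + 1)
    rw [show j + 1 + 1 = j + 2 from by omega,
        show 2 * j + 5 - (j + 1) = j + 4 from by omega] at h
    have h' : (((2 * j + 5).choose (j + 2) * (j + 2) : ℕ) : ℚ)
        = (((2 * j + 5).choose (j + 1) * (j + 4) : ℕ) : ℚ) := by rw [h]
    push_cast at h'
    linarith [h']
  have p4 : (2 : ℚ) ^ (2 * j + 8) = 4 ^ j * 256 := by
    rw [pow_add, pow_mul]; norm_num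
  rw [A, B, C3, D, E, p4]
  push_cast
  set H1 := ∑ t ∈ Finset.range (j + 4), ((2 * j + 8).choose t : ℚ) with hH1d
  set H2 := ∑ u ∈ Finset.range (j + 3), ((2 * j + 7).choose u : ℚ) with hH2d
  set H3 := ∑ v ∈ Finset.range (j + 2), ((2 * j + 6).choose v : ℚ) with hH3d
  set H4 := ∑ w ∈ Finset.range (j + 1), ((2 * j + 5).choose w : ℚ) with hH4d
  set x := (j : ℚ) with hxd
  set c := ((2 * j + 9).choose (j + 5) : ℚ) with hcd
  set B1 := ((2 * j + 8).choose (j + 4) : ℚ) with hB1d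
  set B2 := ((2 * j + 7).choose (j + 3) : ℚ) with hB2d
  set B3 := ((2 * j + 6).choose (j + 2) : ℚ) with hB3d
  set B3' := ((2 * j + 6).choose (j + 3) : ℚ) with hB3'd
  set B4 := ((2 * j + 5).choose (j + 1) : ℚ) with hB4d
  set B4' := ((2 * j + 5).choose (j + 2) : ℚ) with hB4'd
  have hx : 0 ≤ x := by rw [hxd]; positivity
  have hx9 : (2 * x + 9) ≠ 0 := by positivity
  have hx8 : (2 * x + 8) ≠ 0 := by positivity
  have hx7 : (2 * x + 7) ≠ 0 := by positivity
  have hx6 : (2 * x + 6) ≠ 0 := by positivity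
  have hx3 : (x + 3) ≠ 0 := by positivity
  have hx2 : (x + 2) ≠ 0 := by positivity
  have eb1 : B1 = c * (x + 5) / (2 * x + 9) := by
    rw [eq_div_iff hx9]; linarith [r1]
  have eb2 : B2 = B1 * (x + 4) / (2 * x + 8) := by
    rw [eq_div_iff hx8]; linarith [r2]
  have eb3 : B3 = B2 * (x + 3) / (2 * x + 7) := by
    rw [eq_div_iff hx7]; linarith [r3]
  have eb4 : B4 = B3 * (x + 2) / (2 * x + 6) := by
    rw [eq_div_iff hx6]; linarith [r4]
  have eb3' : B3' = B3 * (x + 4) / (x + 3) := by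
    rw [eq_div_iff hx3]; linarith [r5]
  have eb4' : B4' = B4 * (x + 4) / (x + 2) := by
    rw [eq_div_iff hx2]; linarith [r6]
  have eh1 : H1 = (4 ^ j * 256 - B1) / 2 := by linarith [hH1]
  have eh2 : H2 = 4 ^ j * 64 - B2 := by linarith [hH2]
  have eh3 : H3 = (4 ^ j * 64 - B3') / 2 - B3 := by linarith [hH3]
  have eh4 : H4 = 4 ^ j * 16 - B4 - B4' := by linarith [hH4]
  rw [eh1, eh2, eh3, eh4, eb4', eb3', eb4, eb3, eb2, eb1]
  field_simp
  ring
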